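/- For every Λ ∈ ℝ, the linear map ι : Ĝ_Λ → Ĝ_Λ(su(2)) determined on basis elements by E_{kl} ↦ (i/2) J^z_{kl}, Φ_{kl} ↦ (i/2) K^z_{kl}, Θ_{kl} ↦ (i/2) P^z_{kl}, and Z ↦ Z is an injective homomorphism of complex Lie algebras whose image is the subalgebra 𝔥 = span{J^z_{kl}, K^z_{kl}, P^z_{kl} : k,l ∈ ℤ} ⊕ ℂ·Z of Ĝ_Λ(su(2)); in particular, 𝔥 is isomorphic to the abelian free corner algebra Ĝ_Λ. -/

import Mathlib

/-- Index type for the basis of the free corner algebra of 4d abelian BF theory on the torus. -/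
inductive GhatIdx : Type
  | E : ℤ → ℤ → GhatIdx
  | Phi : ℤ → ℤ → GhatIdx
  | Theta : ℤ → ℤ → GhatIdx
  | Z : GhatIdx

/-- `IsAbelianBFCorner Λ G b` says that the complex Lie algebra `G`, with basis `b` indexed by
`GhatIdx`, satisfies the bracket relations of the free corner algebra `Ĝ_Λ` of four-dimensional
abelian BF theory on the torus:
`[E_{kl}, Φ_{mn}] = i m δ_{k,-m} δ_{l,-n} Z`, `[E_{kl}, Θ_{mn}] = -i n δ_{k,-m} δ_{l,-n} Z`,
`[Φ_{kl}, Θ_{mn}] = Λ δ_{k,-m} δ_{l,-n} Z`, all other brackets of basis elements zero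
(`Z` central). -/
structure IsAbelianBFCorner (Λ : ℝ) (G : Type) [LieRing G] [LieAlgebra ℂ G]
    (b : Module.Basis GhatIdx ℂ G) : Prop where
  E_Phi : ∀ k l m n : ℤ, ⁅b (GhatIdx.E k l), b (GhatIdx.Phi m n)⁆ =
      if k = -m ∧ l = -n then (Complex.I * (m : ℂ)) • b GhatIdx.Z else 0
  E_Theta : ∀ k l m n : ℤ, ⁅b (GhatIdx.E k l), b (GhatIdx.Theta m n)⁆ =
      if k = -m ∧ l = -n then (-(Complex.I * (n : ℂ))) • b GhatIdx.Z else 0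
  Phi_Theta : ∀ k l m n : ℤ, ⁅b (GhatIdx.Phi k l), b (GhatIdx.Theta m n)⁆ =
      if k = -m ∧ l = -n then (Λ : ℂ) • b GhatIdx.Z else 0
  E_E : ∀ k l m n : ℤ, ⁅b (GhatIdx.E k l), b (GhatIdx.E m n)⁆ = 0
  Phi_Phi : ∀ k l m n : ℤ, ⁅b (GhatIdx.Phi k l), b (GhatIdx.Phi m n)⁆ = 0
  Theta_Theta : ∀ k l m n : ℤ, ⁅b (GhatIdx.Theta k l), b (GhatIdx.Theta m n)⁆ = 0
  Z_central : ∀ i : GhatIdx, ⁅b GhatIdx.Z, b i⁆ = 0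
/-- The Levi-Civita symbol `ε_{abc}` on `Fin 3` (with values in `ℤ`). -/
def eps (a b c : Fin 3) : ℤ :=
  (((b : ℤ) - (a : ℤ)) * ((c : ℤ) - (b : ℤ)) * ((c : ℤ) - (a : ℤ))) / 2

/-- Index type for the basis of the free corner algebra `Ĝ_Λ(su(2))` of 4d su(2) BF theory on
the torus: generators `J_{μ mn}`, `K_{μ mn}`, `P_{μ mn}` (for `μ ∈ {1,2,3}` encoded as `Fin 3`
and `m,n ∈ ℤ`) and the central element `Z`. -/
inductive NAIdx : Type
  | J : Fin 3 → ℤ → ℤ → NAIdx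
  | K : Fin 3 → ℤ → ℤ → NAIdx
  | P : Fin 3 → ℤ → ℤ → NAIdx
  | Z : NAIdx

/-- `IsSu2BFCorner Λ G b` says that the complex Lie algebra `G`, with basis `b` indexed by
`NAIdx`, satisfies the bracket relations of the free corner algebra `Ĝ_Λ(su(2))` of
four-dimensional su(2) BF theory on the torus:
`[J_{μkl}, J_{νmn}] = Σ_λ ε_{μν}^λ J_{λ(k+m)(l+n)}`,
`[J_{μkl}, K_{νmn}] = Σ_λ ε_{μν}^λ K_{λ(k+m)(l+n)} + i m δ_{μ,ν} δ_{k,-m} δ_{l,-n} Z`,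
`[J_{μkl}, P_{νmn}] = Σ_λ ε_{μν}^λ P_{λ(k+m)(l+n)} − i n δ_{μ,ν} δ_{k,-m} δ_{l,-n} Z`,
`[K_{μkl}, P_{νmn}] = Λ δ_{μ,ν} δ_{k,-m} δ_{l,-n} Z`,
all other brackets of basis elements zero (`Z` central). -/
structure IsSu2BFCorner (Λ : ℝ) (G : Type) [LieRing G] [LieAlgebra ℂ G]
    (b : Module.Basis NAIdx ℂ G) : Prop where
  J_J : ∀ (μ ν : Fin 3) (k l m n : ℤ), ⁅b (NAIdx.J μ k l), b (NAIdx.J ν m n)⁆ =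
      ∑ lam : Fin 3, (eps μ ν lam : ℂ) • b (NAIdx.J lam (k + m) (l + n))
  J_K : ∀ (μ ν : Fin 3) (k l m n : ℤ), ⁅b (NAIdx.J μ k l), b (NAIdx.K ν m n)⁆ =
      (∑ lam : Fin 3, (eps μ ν lam : ℂ) • b (NAIdx.K lam (k + m) (l + n))) +
      (if μ = ν ∧ k = -m ∧ l = -n then (Complex.I * (m : ℂ)) • b NAIdx.Z else 0)
  J_P : ∀ (μ ν : Fin 3) (k l m n : ℤ), ⁅b (NAIdx.J μ k l), b (NAIdx.P ν m n)⁆ =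
      (∑ lam : Fin 3, (eps μ ν lam : ℂ) • b (NAIdx.P lam (k + m) (l + n))) -
      (if μ = ν ∧ k = -m ∧ l = -n then (Complex.I * (n : ℂ)) • b NAIdx.Z else 0)
  K_P : ∀ (μ ν : Fin 3) (k l m n : ℤ), ⁅b (NAIdx.K μ k l), b (NAIdx.P ν m n)⁆ =
      if μ = ν ∧ k = -m ∧ l = -n then (Λ : ℂ) • b NAIdx.Z else 0
  K_K : ∀ (μ ν : Fin 3) (k l m n : ℤ), ⁅b (NAIdx.K μ k l), b (NAIdx.K ν m n)⁆ = 0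
  P_P : ∀ (μ ν : Fin 3) (k l m n : ℤ), ⁅b (NAIdx.P μ k l), b (NAIdx.P ν m n)⁆ = 0
  Z_central : ∀ i : NAIdx, ⁅b NAIdx.Z, b i⁆ = 0
section Ladder

variable {G : Type} [LieRing G] [LieAlgebra ℂ G]

/-- The ladder element `J⁺_{kl} := J_{1kl} − i J_{2kl}`. -/
noncomputable def Jp (b : Module.Basis NAIdx ℂ G) (k l : ℤ) : G :=
  b (NAIdx.J 0 k l) - Complex.I • b (NAIdx.J 1 k l)

/-- The ladder element `J⁻_{kl} := −J_{1kl} − i J_{2kl}`. -/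
noncomputable def Jm (b : Module.Basis NAIdx ℂ G) (k l : ℤ) : G :=
  -b (NAIdx.J 0 k l) - Complex.I • b (NAIdx.J 1 k l)

/-- The ladder element `J^z_{kl} := −2i J_{3kl}`. -/
noncomputable def Jz (b : Module.Basis NAIdx ℂ G) (k l : ℤ) : G :=
  (-2 * Complex.I) • b (NAIdx.J 2 k l)

/-- The ladder element `K⁺_{kl} := K_{1kl} − i K_{2kl}`. -/
noncomputable def Kp (b : Module.Basis NAIdx ℂ G) (k l : ℤ) : G :=
  b (NAIdx.K 0 k l) - Complex.I • b (NAIdx.K 1 k l)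

/-- The ladder element `K⁻_{kl} := −K_{1kl} − i K_{2kl}`. -/
noncomputable def Km (b : Module.Basis NAIdx ℂ G) (k l : ℤ) : G :=
  -b (NAIdx.K 0 k l) - Complex.I • b (NAIdx.K 1 k l)

/-- The ladder element `K^z_{kl} := −2i K_{3kl}`. -/
noncomputable def Kz (b : Module.Basis NAIdx ℂ G) (k l : ℤ) : G :=
  (-2 * Complex.I) • b (NAIdx.K 2 k l)

/-- The ladder element `P⁺_{kl} := P_{1kl} − i P_{2kl}`. -/
noncomputable def Pp (b : Module.Basis NAIdx ℂ G) (k l : ℤ) : G :=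
  b (NAIdx.P 0 k l) - Complex.I • b (NAIdx.P 1 k l)

/-- The ladder element `P⁻_{kl} := −P_{1kl} − i P_{2kl}`. -/
noncomputable def Pm (b : Module.Basis NAIdx ℂ G) (k l : ℤ) : G :=
  -b (NAIdx.P 0 k l) - Complex.I • b (NAIdx.P 1 k l)

/-- The ladder element `P^z_{kl} := −2i P_{3kl}`. -/
noncomputable def Pz (b : Module.Basis NAIdx ℂ G) (k l : ℤ) : G :=
  (-2 * Complex.I) • b (NAIdx.P 2 k l)

/-- The subspace `𝔥 := span{J^z_{kl}, K^z_{kl}, P^z_{kl} : k,l ∈ ℤ} ⊕ ℂ·Z` of `Ĝ_Λ(su(2))`. -/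
noncomputable def hPart (b : Module.Basis NAIdx ℂ G) : Submodule ℂ G :=
  Submodule.span ℂ
    ({x : G | ∃ k l : ℤ, x = Jz b k l ∨ x = Kz b k l ∨ x = Pz b k l} ∪ {b NAIdx.Z})

/-- The subspace `𝔫⁺ := span{J⁺_{kl}, K⁺_{kl}, P⁺_{kl} : k,l ∈ ℤ}` of `Ĝ_Λ(su(2))`. -/
noncomputable def nPlusPart (b : Module.Basis NAIdx ℂ G) : Submodule ℂ G :=
  Submodule.span ℂ {x : G | ∃ k l : ℤ, x = Jp b k l ∨ x = Kp b k l ∨ x = Pp b k l}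

/-- The subspace `𝔫⁻ := span{J⁻_{kl}, K⁻_{kl}, P⁻_{kl} : k,l ∈ ℤ}` of `Ĝ_Λ(su(2))`. -/
noncomputable def nMinusPart (b : Module.Basis NAIdx ℂ G) : Submodule ℂ G :=
  Submodule.span ℂ {x : G | ∃ k l : ℤ, x = Jm b k l ∨ x = Km b k l ∨ x = Pm b k l}

end Ladder


namespace AbelianEmbed

def sig : GhatIdx → NAIdx
  | .E k l => .J 2 k l
  | .Phi k l => .K 2 k l
  | .Theta k l => .P 2 k l
  | .Z => .Z

lemma sig_inj : Function.Injective sig := by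
  intro i j h
  cases i <;> cases j <;> simp_all [sig]

lemma eps_self_cast (a c : Fin 3) : ((eps a a c : ℤ) : ℂ) = 0 := by simp [eps]

end AbelianEmbed

/-- For every `Λ ∈ ℝ`, the linear map `ι : Ĝ_Λ → Ĝ_Λ(su(2))` determined by
`E_{kl} ↦ (i/2) J^z_{kl}`, `Φ_{kl} ↦ (i/2) K^z_{kl}`, `Θ_{kl} ↦ (i/2) P^z_{kl}`, `Z ↦ Z` is an
injective homomorphism of complex Lie algebras whose image is the subalgebra
`𝔥 = span{J^z, K^z, P^z} ⊕ ℂ·Z` of `Ĝ_Λ(su(2))`; in particular `𝔥` is isomorphic to the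
abelian free corner algebra `Ĝ_Λ`. -/
theorem abelian_corner_algebra_embeds_in_su2_corner_algebra (Λ : ℝ)
    (Gab : Type) [LieRing Gab] [LieAlgebra ℂ Gab] (bAb : Module.Basis GhatIdx ℂ Gab)
    (hAb : IsAbelianBFCorner Λ Gab bAb)
    (G : Type) [LieRing G] [LieAlgebra ℂ G] (b : Module.Basis NAIdx ℂ G)
    (hG : IsSu2BFCorner Λ G b) :
    ∃ ι : Gab →ₗ⁅ℂ⁆ G, Function.Injective ι ∧
      (∀ k l : ℤ, ι (bAb (GhatIdx.E k l)) = (Complex.I / 2) • Jz b k l) ∧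
      (∀ k l : ℤ, ι (bAb (GhatIdx.Phi k l)) = (Complex.I / 2) • Kz b k l) ∧
      (∀ k l : ℤ, ι (bAb (GhatIdx.Theta k l)) = (Complex.I / 2) • Pz b k l) ∧
      ι (bAb GhatIdx.Z) = b NAIdx.Z ∧
      LinearMap.range ι.toLinearMap = hPart b := by
    classical
  set f : GhatIdx → G := fun i => b (AbelianEmbed.sig i) with hf
  set ι₀ : Gab →ₗ[ℂ] G := bAb.constr ℂ f with hι₀
  have hb : ∀ i, ι₀ (bAb i) = f i := fun i => bAb.constr_basis ℂ f i
  have hsum : ∀ (g : Fin 3 → G), (∑ lam : Fin 3, ((eps 2 2 lam : ℤ) : ℂ) • g lam) = 0 := by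
    intro g
    apply Finset.sum_eq_zero
    intro lam _
    rw [AbelianEmbed.eps_self_cast, zero_smul]
  have core : ∀ i j : GhatIdx, ι₀ ⁅bAb i, bAb j⁆ = ⁅ι₀ (bAb i), ι₀ (bAb j)⁆ := by
    have skew : ∀ i j : GhatIdx, ι₀ ⁅bAb i, bAb j⁆ = ⁅ι₀ (bAb i), ι₀ (bAb j)⁆ →
        ι₀ ⁅bAb j, bAb i⁆ = ⁅ι₀ (bAb j), ι₀ (bAb i)⁆ := by
      intro i j h
      rw [← lie_skew, map_neg, h]
      exact lie_skew _ _
    have zc : ∀ i : GhatIdx, ι₀ ⁅bAb GhatIdx.Z, bAb i⁆ = ⁅ι₀ (bAb GhatIdx.Z), ι₀ (bAb i)⁆ := by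
      intro i
      rw [hAb.Z_central, map_zero, hb, hb]
      cases i <;> simp [f, AbelianEmbed.sig, hG.Z_central]
    intro i j
    cases i with
    | E k l =>
      cases j with
      | E m n =>
        rw [hAb.E_E, map_zero, hb, hb]
        simp only [f, AbelianEmbed.sig]
        rw [hG.J_J, hsum]
      | Phi m n =>
        rw [hAb.E_Phi, hb, hb]
        simp only [f, AbelianEmbed.sig]
        rw [hG.J_K, hsum, zero_add]
        by_cases h : k = -m ∧ l = -n <;>
          simp [h, apply_ite ι₀, hb, f, AbelianEmbed.sig]
      | Theta m n =>
        rw [hAb.E_Theta, hb, hb]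
        simp only [f, AbelianEmbed.sig]
        rw [hG.J_P, hsum, zero_sub]
        by_cases h : k = -m ∧ l = -n <;>
          simp [h, apply_ite ι₀, hb, f, AbelianEmbed.sig]
      | Z => exact skew _ _ (zc _)
    | Phi k l =>
      cases j with
      | E m n =>
        apply skew
        rw [hAb.E_Phi, hb, hb]
        simp only [f, AbelianEmbed.sig]
        rw [hG.J_K, hsum, zero_add]
        by_cases h : m = -k ∧ n = -l <;>
          simp [h, apply_ite ι₀, hb, f, AbelianEmbed.sig]
      | Phi m n =>
        rw [hAb.Phi_Phi, map_zero, hb, hb]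
        simp only [f, AbelianEmbed.sig]
        rw [hG.K_K]
      | Theta m n =>
        rw [hAb.Phi_Theta, hb, hb]
        simp only [f, AbelianEmbed.sig]
        rw [hG.K_P]
        by_cases h : k = -m ∧ l = -n <;>
          simp [h, apply_ite ι₀, hb, f, AbelianEmbed.sig]
      | Z => exact skew _ _ (zc _)
    | Theta k l =>
      cases j with
      | E m n =>
        apply skew
        rw [hAb.E_Theta, hb, hb]
        simp only [f, AbelianEmbed.sig]
        rw [hG.J_P, hsum, zero_sub]
        by_cases h : m = -k ∧ n = -l <;>
          simp [h, apply_ite ι₀, hb, f, AbelianEmbed.sig]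
      | Phi m n =>
        apply skew
        rw [hAb.Phi_Theta, hb, hb]
        simp only [f, AbelianEmbed.sig]
        rw [hG.K_P]
        by_cases h : m = -k ∧ n = -l <;>
          simp [h, apply_ite ι₀, hb, f, AbelianEmbed.sig]
      | Theta m n =>
        rw [hAb.Theta_Theta, map_zero, hb, hb]
        simp only [f, AbelianEmbed.sig]
        rw [hG.P_P]
      | Z => exact skew _ _ (zc _)
    | Z => exact zc j
  -- bilinearity upgrade
  have key : ∀ x y : Gab, ι₀ ⁅x, y⁆ = ⁅ι₀ x, ι₀ y⁆ := by
    let F : Gab →ₗ[ℂ] Gab →ₗ[ℂ] G :=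
      { toFun := fun x => ι₀ ∘ₗ LieAlgebra.ad ℂ Gab x
        map_add' := by intro x y; ext z; simp
        map_smul' := by intro c x; ext z; simp }
    let F' : Gab →ₗ[ℂ] Gab →ₗ[ℂ] G :=
      { toFun := fun x => (LieAlgebra.ad ℂ G (ι₀ x)) ∘ₗ ι₀
        map_add' := by intro x y; ext z; simp
        map_smul' := by intro c x; ext z; simp }
    have hFF : F = F' := by
      apply bAb.ext
      intro i
      apply bAb.ext
      intro j
      simpa [F, F'] using core i j
    intro x y
    simpa [F, F'] using LinearMap.congr_fun (LinearMap.congr_fun hFF x) y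
  refine ⟨{ ι₀ with map_lie' := fun {x y} => key x y }, ?_, ?_, ?_, ?_, ?_, ?_⟩
  · -- injective
    have hli : LinearIndependent ℂ f := b.linearIndependent.comp _ AbelianEmbed.sig_inj
    intro x y hxy
    have hx : ι₀ x = ι₀ y := hxy
    have : Finsupp.linearCombination ℂ f (bAb.repr x) = Finsupp.linearCombination ℂ f (bAb.repr y) := by
      rw [Finsupp.linearCombination_apply, Finsupp.linearCombination_apply,
        ← bAb.constr_apply ℂ f x, ← bAb.constr_apply ℂ f y]
      exact hx
    have := hli this
    exact bAb.repr.injective this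
  · intro k l
    show ι₀ (bAb (GhatIdx.E k l)) = _
    rw [hb]
    simp only [f, AbelianEmbed.sig, Jz, smul_smul]
    rw [show Complex.I / 2 * (-2 * Complex.I) = 1 by
      rw [div_mul_eq_mul_div]; ring_nf; rw [Complex.I_sq]; norm_num]
    rw [one_smul]
  · intro k l
    show ι₀ (bAb (GhatIdx.Phi k l)) = _
    rw [hb]
    simp only [f, AbelianEmbed.sig, Kz, smul_smul]
    rw [show Complex.I / 2 * (-2 * Complex.I) = 1 by
      rw [div_mul_eq_mul_div]; ring_nf; rw [Complex.I_sq]; norm_num]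
    rw [one_smul]
  · intro k l
    show ι₀ (bAb (GhatIdx.Theta k l)) = _
    rw [hb]
    simp only [f, AbelianEmbed.sig, Pz, smul_smul]
    rw [show Complex.I / 2 * (-2 * Complex.I) = 1 by
      rw [div_mul_eq_mul_div]; ring_nf; rw [Complex.I_sq]; norm_num]
    rw [one_smul]
  · exact hb GhatIdx.Z
  · show LinearMap.range ι₀ = hPart b
    rw [hι₀, bAb.constr_range]
    apply le_antisymm
    · rw [Submodule.span_le]
      rintro x ⟨i, rfl⟩
      cases i with
      | E k l =>
        have : f (GhatIdx.E k l) = (Complex.I / 2) • Jz b k l := by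
          simp only [f, AbelianEmbed.sig, Jz, smul_smul]
          rw [show Complex.I / 2 * (-2 * Complex.I) = 1 by
            rw [div_mul_eq_mul_div]; ring_nf; rw [Complex.I_sq]; norm_num, one_smul]
        rw [this]
        exact Submodule.smul_mem _ _ (Submodule.subset_span (Or.inl ⟨k, l, Or.inl rfl⟩))
      | Phi k l =>
        have : f (GhatIdx.Phi k l) = (Complex.I / 2) • Kz b k l := by
          simp only [f, AbelianEmbed.sig, Kz, smul_smul]
          rw [show Complex.I / 2 * (-2 * Complex.I) = 1 by
            rw [div_mul_eq_mul_div]; ring_nf; rw [Complex.I_sq]; norm_num, one_smul]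
        rw [this]
        exact Submodule.smul_mem _ _ (Submodule.subset_span (Or.inl ⟨k, l, Or.inr (Or.inl rfl)⟩))
      | Theta k l =>
        have : f (GhatIdx.Theta k l) = (Complex.I / 2) • Pz b k l := by
          simp only [f, AbelianEmbed.sig, Pz, smul_smul]
          rw [show Complex.I / 2 * (-2 * Complex.I) = 1 by
            rw [div_mul_eq_mul_div]; ring_nf; rw [Complex.I_sq]; norm_num, one_smul]
        rw [this]
        exact Submodule.smul_mem _ _ (Submodule.subset_span (Or.inl ⟨k, l, Or.inr (Or.inr rfl)⟩))
      | Z =>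
        exact Submodule.subset_span (Or.inr rfl)
    · rw [hPart, Submodule.span_le]
      rintro x (⟨k, l, (rfl | rfl | rfl)⟩ | rfl)
      · rw [Jz]
        exact Submodule.smul_mem _ _ (Submodule.subset_span ⟨GhatIdx.E k l, rfl⟩)
      · rw [Kz]
        exact Submodule.smul_mem _ _ (Submodule.subset_span ⟨GhatIdx.Phi k l, rfl⟩)
      · rw [Pz]
        exact Submodule.smul_mem _ _ (Submodule.subset_span ⟨GhatIdx.Theta k l, rfl⟩)
      · exact Submodule.subset_span ⟨GhatIdx.Z, rfl⟩
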